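/- Let k be a field. In k[x, y, z], let a, b, c, b', c', α, β, γ be natural numbers with 0 < b' < b, 0 < c' < c, 0 < α < a, 0 ≤ β < b − b', and 0 ≤ γ < c − c'. Then the ideal quotient (x^a − y^{b'}z^{c'}, y^b, z^c) : (x^α y^β z^γ) equals the ideal (x^a − y^{b'}z^{c'}, y^{b−β}, z^{c−γ}, x^{a−α}y^{b−b'−β}, x^{a−α}z^{c−c'−γ}). -/

import Mathlib

/-!
Modulo `I = (x^a - y^{b'} z^{c'}, y^b, z^c)` every monomial reduces, by trading `x^a` for
`y^{b'} z^{c'}` and discarding whatever is divisible by `y^b` or `z^c`, to zero or a standard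
monomial `x^i y^j z^l` with `i < a`, `j < b`, `l < c`. This gives a `k`-linear map `normalForm`
with `p - normalForm p ∈ I` that vanishes on `I`. Since `α < a`, multiplying a standard monomial
by `x^α y^β z^γ` and reducing uses the relation at most once, and the result is zero exactly when
the monomial lies in the ideal `J` on the right-hand side; otherwise the monomial can be read off
from the result. Undoing this monomial by monomial gives a linear map `mulLeftInverse` with
`q - mulLeftInverse (normalForm (q * x^α y^β z^γ)) ∈ J` for every `q` in the image of
`normalForm`. For `p` with `p * x^α y^β z^γ ∈ I` and `q = normalForm p` the subtracted term is
zero, so `p ∈ J`. The reverse inclusion is a check on the generators of `J`.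
-/

open MvPolynomial

namespace BinomialColon

variable {k : Type*} [CommRing k]

variable (k) in
noncomputable def xyz (i j l : ℕ) : MvPolynomial (Fin 3) k :=
  X 0 ^ i * X 1 ^ j * X 2 ^ l

lemma xyz_mul (i j l i' j' l' : ℕ) :
    xyz k i j l * xyz k i' j' l' = xyz k (i + i') (j + j') (l + l') := by
  simp only [xyz, pow_add]; ring

lemma monomial_eq_smul_xyz (d : Fin 3 →₀ ℕ) (r : k) :
    monomial d r = r • xyz k (d 0) (d 1) (d 2) := by
  rw [monomial_eq, Finsupp.prod_fintype _ _ (by simp), Fin.prod_univ_three, smul_eq_C_mul, xyz]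

lemma xyz_mem_of_le {T : Ideal (MvPolynomial (Fin 3) k)} {i j l i' j' l' : ℕ}
    (h : xyz k i j l ∈ T) (hi : i ≤ i') (hj : j ≤ j') (hl : l ≤ l') : xyz k i' j' l' ∈ T := by
  obtain ⟨i', rfl⟩ := Nat.exists_eq_add_of_le hi
  obtain ⟨j', rfl⟩ := Nat.exists_eq_add_of_le hj
  obtain ⟨l', rfl⟩ := Nat.exists_eq_add_of_le hl
  rw [← xyz_mul]
  exact T.mul_mem_right _ h

lemma apply_mem_of_forall_xyz {M : Type*} [AddCommMonoid M] [Module k M]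
    (L : MvPolynomial (Fin 3) k →ₗ[k] M) {T : Submodule k M}
    (h : ∀ i j l, L (xyz k i j l) ∈ T) (p : MvPolynomial (Fin 3) k) : L p ∈ T := by
  induction p using MvPolynomial.induction_on' with
  | monomial d r => rw [monomial_eq_smul_xyz, map_smul]; exact T.smul_mem r (h _ _ _)
  | add p q hp hq => rw [map_add]; exact T.add_mem hp hq

noncomputable def xyzLift {M : Type*} [AddCommMonoid M] [Module k M] (v : ℕ → ℕ → ℕ → M) :
    MvPolynomial (Fin 3) k →ₗ[k] M :=
  (basisMonomials (Fin 3) k).constr k fun d => v (d 0) (d 1) (d 2)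

lemma xyzLift_xyz {M : Type*} [AddCommMonoid M] [Module k M] (v : ℕ → ℕ → ℕ → M)
    (i j l : ℕ) : xyzLift v (xyz k i j l) = v i j l := by
  set d : Fin 3 →₀ ℕ := Finsupp.single 0 i + Finsupp.single 1 j + Finsupp.single 2 l
  have hd : d 0 = i ∧ d 1 = j ∧ d 2 = l := by simp [d]
  have h := (basisMonomials (Fin 3) k).constr_basis k (fun d => v (d 0) (d 1) (d 2)) d
  simp only [coe_basisMonomials] at h
  rwa [monomial_eq_smul_xyz, one_smul, hd.1, hd.2.1, hd.2.2] at h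

section NormalForm

variable {a b c b' c' : ℕ}

variable (k a b c b' c') in
noncomputable def binomialIdeal : Ideal (MvPolynomial (Fin 3) k) :=
  Ideal.span {X 0 ^ a - X 1 ^ b' * X 2 ^ c', X 1 ^ b, X 2 ^ c}

variable (k a b c b' c') in
noncomputable def normalForm : MvPolynomial (Fin 3) k →ₗ[k] MvPolynomial (Fin 3) k :=
  xyzLift fun i j l =>
    if j + i / a * b' < b ∧ l + i / a * c' < c then
      xyz k (i % a) (j + i / a * b') (l + i / a * c')
    else 0

lemma normalForm_xyz (i j l : ℕ) :
    normalForm k a b c b' c' (xyz k i j l) =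
      if j + i / a * b' < b ∧ l + i / a * c' < c then
        xyz k (i % a) (j + i / a * b') (l + i / a * c')
      else 0 :=
  xyzLift_xyz _ i j l

lemma normalForm_xyz_of_lt {i : ℕ} (hi : i < a) (j l : ℕ) :
    normalForm k a b c b' c' (xyz k i j l) = if j < b ∧ l < c then xyz k i j l else 0 := by
  simp [normalForm_xyz, Nat.div_eq_of_lt hi, Nat.mod_eq_of_lt hi]

lemma normalForm_xyz_add_left (ha : 0 < a) (i j l : ℕ) :
    normalForm k a b c b' c' (xyz k (i + a) j l) =
      normalForm k a b c b' c' (xyz k i (j + b') (l + c')) := by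
  simp only [normalForm_xyz, Nat.add_div_right i ha, Nat.add_mod_right, add_mul, one_mul,
    add_assoc, add_comm b', add_comm c']

lemma xyz_add_mul_sub_mem (q i j l : ℕ) :
    xyz k (i + a * q) j l - xyz k i (j + q * b') (l + q * c') ∈ binomialIdeal k a b c b' c' := by
  have hx : X 0 ^ a ≡ X 1 ^ b' * X 2 ^ c' [SMOD binomialIdeal k a b c b' c'] :=
    SModEq.sub_mem.2 (Ideal.subset_span (by simp))
  have hl : xyz k (i + a * q) j l = xyz k i j l * (X 0 ^ a) ^ q := by
    simp only [xyz]; ring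
  have hr : xyz k i (j + q * b') (l + q * c') = xyz k i j l * (X 1 ^ b' * X 2 ^ c') ^ q := by
    simp only [xyz]; ring
  rw [hl, hr, ← SModEq.sub_mem]
  exact SModEq.rfl.mul (hx.pow q)

lemma xyz_mem_binomialIdeal {i j l : ℕ} (h : b ≤ j ∨ c ≤ l) :
    xyz k i j l ∈ binomialIdeal k a b c b' c' := by
  rcases h with h | h
  · exact xyz_mem_of_le (i := 0) (j := b) (l := 0) (Ideal.subset_span (by simp [xyz]))
      (Nat.zero_le _) h (Nat.zero_le _)
  · exact xyz_mem_of_le (i := 0) (j := 0) (l := c) (Ideal.subset_span (by simp [xyz]))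
      (Nat.zero_le _) (Nat.zero_le _) h

lemma xyz_mem_binomialIdeal_of_le {i j l : ℕ} (hi : a ≤ i) (h : b ≤ j + b' ∨ c ≤ l + c') :
    xyz k i j l ∈ binomialIdeal k a b c b' c' := by
  obtain ⟨i, rfl⟩ := Nat.exists_eq_add_of_le' hi
  have hsub : xyz k (i + a * 1) j l - xyz k i (j + 1 * b') (l + 1 * c') ∈
      binomialIdeal k a b c b' c' := xyz_add_mul_sub_mem 1 i j l
  rw [mul_one, one_mul, one_mul] at hsub
  rw [← sub_add_cancel (xyz k (i + a) j l) (xyz k i (j + b') (l + c'))]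
  exact Ideal.add_mem _ hsub (xyz_mem_binomialIdeal h)

lemma xyz_sub_normalForm_mem (i j l : ℕ) :
    xyz k i j l - normalForm k a b c b' c' (xyz k i j l) ∈ binomialIdeal k a b c b' c' := by
  have hsub : xyz k (i % a + a * (i / a)) j l - xyz k (i % a) (j + i / a * b') (l + i / a * c') ∈
      binomialIdeal k a b c b' c' := xyz_add_mul_sub_mem (i / a) (i % a) j l
  rw [Nat.mod_add_div] at hsub
  rw [normalForm_xyz]
  split_ifs with h
  · exact hsub
  · rw [sub_zero, ← sub_add_cancel (xyz k i j l) _]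
    exact Ideal.add_mem _ hsub (xyz_mem_binomialIdeal (by omega))

lemma sub_normalForm_mem (p : MvPolynomial (Fin 3) k) :
    p - normalForm k a b c b' c' p ∈ binomialIdeal k a b c b' c' :=
  apply_mem_of_forall_xyz (LinearMap.id - normalForm k a b c b' c')
    (T := (binomialIdeal k a b c b' c').restrictScalars k) xyz_sub_normalForm_mem p

lemma normalForm_mul_generator_eq_zero (ha : 0 < a) {g : MvPolynomial (Fin 3) k}
    (hg : g ∈ ({X 0 ^ a - X 1 ^ b' * X 2 ^ c', X 1 ^ b, X 2 ^ c} : Set _))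
    (q : MvPolynomial (Fin 3) k) : normalForm k a b c b' c' (q * g) = 0 := by
  suffices ∀ i j l, normalForm k a b c b' c' (xyz k i j l * g) = 0 from
    apply_mem_of_forall_xyz (normalForm k a b c b' c' ∘ₗ LinearMap.mulRight k g) (T := ⊥) this q
  intro i j l
  rcases hg with rfl | rfl | rfl
  · have h : xyz k i j l * (X 0 ^ a - X 1 ^ b' * X 2 ^ c') =
        xyz k (i + a) j l - xyz k i (j + b') (l + c') := by
      simp only [xyz]; ring
    rw [h, map_sub, normalForm_xyz_add_left ha, sub_self]
  · have h : xyz k i j l * X 1 ^ b = xyz k i (j + b) l := by simp only [xyz]; ring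
    rw [h, normalForm_xyz, if_neg (by omega)]
  · have h : xyz k i j l * X 2 ^ c = xyz k i j (l + c) := by simp only [xyz]; ring
    rw [h, normalForm_xyz, if_neg (by omega)]

lemma normalForm_eq_zero_of_mem (ha : 0 < a) {p : MvPolynomial (Fin 3) k}
    (hp : p ∈ binomialIdeal k a b c b' c') : normalForm k a b c b' c' p = 0 := by
  suffices ∀ q, normalForm k a b c b' c' (q * p) = 0 by simpa using this 1
  induction hp using Submodule.span_induction with
  | mem g hg => exact normalForm_mul_generator_eq_zero ha hg
  | zero => simp
  | add x y _ _ hx hy => intro q; rw [mul_add, map_add, hx, hy, add_zero]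
  | smul r x _ hx => intro q; rw [smul_eq_mul, ← mul_assoc, hx]

end NormalForm

section Colon

variable {a b c b' c' α β γ : ℕ}

variable (k a b c b' c' α β γ) in
noncomputable def colonIdeal : Ideal (MvPolynomial (Fin 3) k) :=
  Ideal.span {X 0 ^ a - X 1 ^ b' * X 2 ^ c', X 1 ^ (b - β), X 2 ^ (c - γ),
    X 0 ^ (a - α) * X 1 ^ (b - b' - β), X 0 ^ (a - α) * X 2 ^ (c - c' - γ)}

lemma xyz_mem_colonIdeal {i j l : ℕ}
    (h : b - β ≤ j ∨ c - γ ≤ l ∨ a - α ≤ i ∧ (b - b' - β ≤ j ∨ c - c' - γ ≤ l)) :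
    xyz k i j l ∈ colonIdeal k a b c b' c' α β γ := by
  rcases h with h | h | ⟨hi, h | h⟩
  · exact xyz_mem_of_le (i := 0) (j := b - β) (l := 0) (Ideal.subset_span (by simp [xyz]))
      (Nat.zero_le _) h (Nat.zero_le _)
  · exact xyz_mem_of_le (i := 0) (j := 0) (l := c - γ) (Ideal.subset_span (by simp [xyz]))
      (Nat.zero_le _) (Nat.zero_le _) h
  · exact xyz_mem_of_le (i := a - α) (j := b - b' - β) (l := 0)
      (Ideal.subset_span (by simp [xyz])) hi h (Nat.zero_le _)
  · exact xyz_mem_of_le (i := a - α) (j := 0) (l := c - c' - γ)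
      (Ideal.subset_span (by simp [xyz])) hi (Nat.zero_le _) h

lemma binomialIdeal_le_colonIdeal :
    binomialIdeal k a b c b' c' ≤ colonIdeal k a b c b' c' α β γ := by
  rw [binomialIdeal, Ideal.span_le]
  rintro g (rfl | rfl | rfl)
  · exact Ideal.subset_span (by simp)
  · simpa [xyz] using xyz_mem_colonIdeal (k := k) (i := 0) (j := b) (l := 0)
      (.inl (Nat.sub_le b β))
  · simpa [xyz] using xyz_mem_colonIdeal (k := k) (i := 0) (j := 0) (l := c)
      (.inr (.inl (Nat.sub_le c γ)))

lemma colonIdeal_le_colon (hαa : α < a) :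
    colonIdeal k a b c b' c' α β γ ≤
      (binomialIdeal k a b c b' c').colon (Ideal.span {xyz k α β γ} : Set _) := by
  rw [colonIdeal, Ideal.span_le]
  rintro g (rfl | rfl | rfl | rfl | rfl) <;>
    rw [SetLike.mem_coe, Ideal.mem_colon_span_singleton]
  · exact Ideal.mul_mem_right _ _ (Ideal.subset_span (by simp))
  · rw [show X 1 ^ (b - β) = xyz k 0 (b - β) 0 by simp [xyz], xyz_mul]
    exact xyz_mem_binomialIdeal (.inl (by omega))
  · rw [show X 2 ^ (c - γ) = xyz k 0 0 (c - γ) by simp [xyz], xyz_mul]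
    exact xyz_mem_binomialIdeal (.inr (by omega))
  · rw [show X 0 ^ (a - α) * X 1 ^ (b - b' - β) = xyz k (a - α) (b - b' - β) 0 by simp [xyz],
      xyz_mul]
    exact xyz_mem_binomialIdeal_of_le (by omega) (.inl (by omega))
  · rw [show X 0 ^ (a - α) * X 2 ^ (c - c' - γ) = xyz k (a - α) 0 (c - c' - γ) by simp [xyz],
      xyz_mul]
    exact xyz_mem_binomialIdeal_of_le (by omega) (.inr (by omega))

variable (k a b' c' α β γ) in
noncomputable def mulLeftInverse : MvPolynomial (Fin 3) k →ₗ[k] MvPolynomial (Fin 3) k :=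
  xyzLift fun i j l =>
    -- `i < α` means that the reduction traded one `x^a` for `y^{b'} z^{c'}`
    if α ≤ i then xyz k (i - α) (j - β) (l - γ)
    else xyz k (i + a - α) (j - β - b') (l - γ - c')

lemma mulLeftInverse_xyz (i j l : ℕ) :
    mulLeftInverse k a b' c' α β γ (xyz k i j l) =
      if α ≤ i then xyz k (i - α) (j - β) (l - γ)
      else xyz k (i + a - α) (j - β - b') (l - γ - c') :=
  xyzLift_xyz _ i j l

lemma xyz_sub_mulLeftInverse_mem (hαa : α < a) {i : ℕ} (hi : i < a) (j l : ℕ) :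
    xyz k i j l - mulLeftInverse k a b' c' α β γ
        (normalForm k a b c b' c' (xyz k i j l * xyz k α β γ)) ∈
      colonIdeal k a b c b' c' α β γ := by
  rw [xyz_mul]
  by_cases hiα : i + α < a
  · rw [normalForm_xyz_of_lt hiα]
    split_ifs with h
    · rw [mulLeftInverse_xyz, if_pos (by omega), Nat.add_sub_cancel, Nat.add_sub_cancel,
        Nat.add_sub_cancel, sub_self]
      exact zero_mem _
    · rw [map_zero, sub_zero]
      exact xyz_mem_colonIdeal (by omega)
  · obtain ⟨s, hs⟩ : ∃ s, i + α = s + a := ⟨i + α - a, by omega⟩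
    rw [hs, normalForm_xyz_add_left (by omega),
      normalForm_xyz_of_lt (show s < a by omega)]
    split_ifs with h
    · rw [mulLeftInverse_xyz, if_neg (by omega), show s + a - α = i by omega,
        show j + β + b' - β - b' = j by omega, show l + γ + c' - γ - c' = l by omega, sub_self]
      exact zero_mem _
    · rw [map_zero, sub_zero]
      exact xyz_mem_colonIdeal (by omega)

lemma normalForm_sub_mulLeftInverse_mem (hαa : α < a) (p : MvPolynomial (Fin 3) k) :
    normalForm k a b c b' c' p - mulLeftInverse k a b' c' α β γ
        (normalForm k a b c b' c' (normalForm k a b c b' c' p * xyz k α β γ)) ∈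
      colonIdeal k a b c b' c' α β γ := by
  let L := (LinearMap.id - mulLeftInverse k a b' c' α β γ ∘ₗ normalForm k a b c b' c' ∘ₗ
    LinearMap.mulRight k (xyz k α β γ)) ∘ₗ normalForm k a b c b' c'
  refine apply_mem_of_forall_xyz L (T := (colonIdeal k a b c b' c' α β γ).restrictScalars k)
    (fun i j l => ?_) p
  simp only [L, LinearMap.comp_apply, LinearMap.sub_apply, LinearMap.id_apply,
    LinearMap.mulRight_apply, Submodule.restrictScalars_mem, normalForm_xyz]
  split_ifs
  · exact xyz_sub_mulLeftInverse_mem hαa (Nat.mod_lt i (by omega)) _ _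
  · simp

lemma mem_colonIdeal_of_mul_mem (hαa : α < a) {p : MvPolynomial (Fin 3) k}
    (hp : p * xyz k α β γ ∈ binomialIdeal k a b c b' c') :
    p ∈ colonIdeal k a b c b' c' α β γ := by
  have hp' : p - normalForm k a b c b' c' p ∈ binomialIdeal k a b c b' c' := sub_normalForm_mem p
  have hred : normalForm k a b c b' c' p * xyz k α β γ ∈ binomialIdeal k a b c b' c' := by
    have := Ideal.sub_mem _ hp (Ideal.mul_mem_right (xyz k α β γ) _ hp')
    rwa [← sub_mul, sub_sub_cancel] at this
  have hkey : normalForm k a b c b' c' p ∈ colonIdeal k a b c b' c' α β γ := by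
    convert normalForm_sub_mulLeftInverse_mem hαa p using 1
    rw [normalForm_eq_zero_of_mem (by omega) hred, map_zero, sub_zero]
  rw [← sub_add_cancel p (normalForm k a b c b' c' p)]
  exact Ideal.add_mem _ (binomialIdeal_le_colonIdeal hp') hkey

theorem colon_eq_colonIdeal (hαa : α < a) :
    (binomialIdeal k a b c b' c').colon (Ideal.span {xyz k α β γ} : Set _) =
      colonIdeal k a b c b' c' α β γ :=
  le_antisymm
    (fun _ hp => mem_colonIdeal_of_mul_mem hαa (Ideal.mem_colon_span_singleton.1 hp))
    (colonIdeal_le_colon hαa)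

end Colon

end BinomialColon

theorem stmt_11 (k : Type*) [Field k] (a b c b' c' α β γ : ℕ)
    (hαa : α < a) :
    (Ideal.span {X 0 ^ a - X 1 ^ b' * X 2 ^ c', X 1 ^ b, X 2 ^ c} :
        Ideal (MvPolynomial (Fin 3) k)).colon
      ((Ideal.span {X 0 ^ α * X 1 ^ β * X 2 ^ γ} : Ideal (MvPolynomial (Fin 3) k)) :
        Set (MvPolynomial (Fin 3) k)) =
    Ideal.span {X 0 ^ a - X 1 ^ b' * X 2 ^ c', X 1 ^ (b - β), X 2 ^ (c - γ),
      X 0 ^ (a - α) * X 1 ^ (b - b' - β), X 0 ^ (a - α) * X 2 ^ (c - c' - γ)} :=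
  BinomialColon.colon_eq_colonIdeal hαa
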